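/- arXiv:1704.01681 — 4 statements merged into one kernel-verified Lean document; each statement's English description precedes it below -/
import Mathlib

section
/- The polynomials Φ_n^*(z) evaluated at a fixed point z form a martingale: if the α_j are independent integrable complex random variables with mean zero, and F_n = σ(α_0, …, α_{n−1}), then E[Φ_j^*(z) | F_n] = Φ_n^*(z) for all j ≥ n. -/
open MeasureTheory ProbabilityTheory

/-- The integral of a product of independent integrable complex random variables
is the product of the integrals. -/
lemma aux_integral_mul_complex {Ω : Type*} [MeasurableSpace Ω] {μ : Measure Ω}
    {X Y : Ω → ℂ} (h : IndepFun X Y μ) (hX : Integrable X μ) (hY : Integrable Y μ) :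
    ∫ ω, X ω * Y ω ∂μ = (∫ ω, X ω ∂μ) * ∫ ω, Y ω ∂μ := by
  have hXY : Integrable (X * Y) μ := h.integrable_mul hX hY
  have hXr : Integrable (fun ω => (X ω).re) μ := by simpa using hX.re
  have hXi : Integrable (fun ω => (X ω).im) μ := by simpa using hX.im
  have hYr : Integrable (fun ω => (Y ω).re) μ := by simpa using hY.re
  have hYi : Integrable (fun ω => (Y ω).im) μ := by simpa using hY.im
  have hrr : IndepFun (fun ω => (X ω).re) (fun ω => (Y ω).re) μ :=
    h.comp Complex.measurable_re Complex.measurable_re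
  have hri : IndepFun (fun ω => (X ω).re) (fun ω => (Y ω).im) μ :=
    h.comp Complex.measurable_re Complex.measurable_im
  have hir : IndepFun (fun ω => (X ω).im) (fun ω => (Y ω).re) μ :=
    h.comp Complex.measurable_im Complex.measurable_re
  have hii : IndepFun (fun ω => (X ω).im) (fun ω => (Y ω).im) μ :=
    h.comp Complex.measurable_im Complex.measurable_im
  have irr : Integrable (fun ω => (X ω).re * (Y ω).re) μ := hrr.integrable_mul hXr hYr
  have iri : Integrable (fun ω => (X ω).re * (Y ω).im) μ := hri.integrable_mul hXr hYi
  have iir : Integrable (fun ω => (X ω).im * (Y ω).re) μ := hir.integrable_mul hXi hYr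
  have iii : Integrable (fun ω => (X ω).im * (Y ω).im) μ := hii.integrable_mul hXi hYi
  have err : ∫ ω, (X ω).re * (Y ω).re ∂μ = (∫ ω, (X ω).re ∂μ) * ∫ ω, (Y ω).re ∂μ :=
    hrr.integral_fun_mul_eq_mul_integral hXr.aestronglyMeasurable hYr.aestronglyMeasurable
  have eri : ∫ ω, (X ω).re * (Y ω).im ∂μ = (∫ ω, (X ω).re ∂μ) * ∫ ω, (Y ω).im ∂μ :=
    hri.integral_fun_mul_eq_mul_integral hXr.aestronglyMeasurable hYi.aestronglyMeasurable
  have eir : ∫ ω, (X ω).im * (Y ω).re ∂μ = (∫ ω, (X ω).im ∂μ) * ∫ ω, (Y ω).re ∂μ :=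
    hir.integral_fun_mul_eq_mul_integral hXi.aestronglyMeasurable hYr.aestronglyMeasurable
  have eii : ∫ ω, (X ω).im * (Y ω).im ∂μ = (∫ ω, (X ω).im ∂μ) * ∫ ω, (Y ω).im ∂μ :=
    hii.integral_fun_mul_eq_mul_integral hXi.aestronglyMeasurable hYi.aestronglyMeasurable
  have hXre : ∫ ω, (X ω).re ∂μ = (∫ ω, X ω ∂μ).re := by
    simpa using integral_re (𝕜 := ℂ) hX
  have hXim : ∫ ω, (X ω).im ∂μ = (∫ ω, X ω ∂μ).im := by
    simpa using integral_im (𝕜 := ℂ) hX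
  have hYre : ∫ ω, (Y ω).re ∂μ = (∫ ω, Y ω ∂μ).re := by
    simpa using integral_re (𝕜 := ℂ) hY
  have hYim : ∫ ω, (Y ω).im ∂μ = (∫ ω, Y ω ∂μ).im := by
    simpa using integral_im (𝕜 := ℂ) hY
  have hmulint : Integrable (fun ω => X ω * Y ω) μ := hXY
  apply Complex.ext
  · have h1 : (∫ ω, X ω * Y ω ∂μ).re = ∫ ω, (X ω * Y ω).re ∂μ :=
      (integral_re (𝕜 := ℂ) hmulint).symm
    rw [h1]
    have : (fun ω => (X ω * Y ω).re)
        = fun ω => (X ω).re * (Y ω).re - (X ω).im * (Y ω).im := by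
      funext ω; exact Complex.mul_re _ _
    rw [this, integral_sub irr iii, err, eii, hXre, hXim, hYre, hYim, Complex.mul_re]
  · have h1 : (∫ ω, X ω * Y ω ∂μ).im = ∫ ω, (X ω * Y ω).im ∂μ :=
      (integral_im (𝕜 := ℂ) hmulint).symm
    rw [h1]
    have : (fun ω => (X ω * Y ω).im)
        = fun ω => (X ω).re * (Y ω).im + (X ω).im * (Y ω).re := by
      funext ω; exact Complex.mul_im _ _
    rw [this, integral_add iri iir, eri, eir, hXre, hXim, hYre, hYim, Complex.mul_im]

/-- At a fixed point `z`, the reversed Szegő polynomials with independent mean-zero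
Verblunsky parameters form a martingale with respect to the natural filtration. -/
theorem stmt_2 {Ω : Type*} [m : MeasurableSpace Ω] (μ : Measure Ω) [IsProbabilityMeasure μ]
    (α : ℕ → Ω → ℂ) (hmeas : ∀ n, Measurable (α n))
    (hindep : iIndepFun α μ)
    (hbdd : ∀ n ω, ‖α n ω‖ ≤ 1)
    (hmean : ∀ n, ∫ ω, α n ω ∂μ = 0)
    (z : ℂ) (Φ Φs : ℕ → Ω → ℂ)
    (h0 : ∀ ω, Φ 0 ω = 1) (h0s : ∀ ω, Φs 0 ω = 1)
    (hrec : ∀ n ω, Φ (n + 1) ω = z * Φ n ω - (starRingEnd ℂ) (α n ω) * Φs n ω)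
    (hrecs : ∀ n ω, Φs (n + 1) ω = Φs n ω - α n ω * z * Φ n ω)
    (F : ℕ → MeasurableSpace Ω)
    (hF : ∀ n, F n = ⨆ j ∈ Finset.range n, MeasurableSpace.comap (α j) inferInstance) :
    ∀ n j, n ≤ j → μ[Φs j | F n] =ᵐ[μ] Φs n := by
  -- basic facts about the filtration
  have hbddn : ∀ n ω, ‖α n ω‖ ≤ 1 := by
    intro n ω; exact hbdd n ω
  have hFle : ∀ n, F n ≤ m := by
    intro n
    rw [hF n]
    exact iSup₂_le fun j _ => (hmeas j).comap_le
  have hFmono : ∀ {a b : ℕ}, a ≤ b → F a ≤ F b := by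
    intro a b hab
    rw [hF a, hF b]
    exact biSup_mono fun j hj => Finset.mem_range.2 (lt_of_lt_of_le (Finset.mem_range.1 hj) hab)
  -- measurability of α j with respect to F n for j < n
  have hαF : ∀ j n, j < n → Measurable[F n] (α j) := by
    intro j n hj
    have h1 : MeasurableSpace.comap (α j) inferInstance ≤ F n := by
      rw [hF n]
      exact le_biSup (fun j => MeasurableSpace.comap (α j) inferInstance)
        (Finset.mem_range.2 hj)
    exact (comap_measurable (α j)).mono h1 le_rfl
  -- strong measurability of Φ and Φs
  have hSM : ∀ n, StronglyMeasurable[F n] (Φ n) ∧ StronglyMeasurable[F n] (Φs n) := by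
    intro n
    induction n with
    | zero =>
      constructor
      · have : Φ 0 = fun _ => (1 : ℂ) := funext h0
        rw [this]; exact stronglyMeasurable_const
      · have : Φs 0 = fun _ => (1 : ℂ) := funext h0s
        rw [this]; exact stronglyMeasurable_const
    | succ n ih =>
      have hα : StronglyMeasurable[F (n + 1)] (α n) :=
        (hαF n (n + 1) (Nat.lt_succ_self n)).stronglyMeasurable
      have hΦ : StronglyMeasurable[F (n + 1)] (Φ n) :=
        ih.1.mono (hFmono (Nat.le_succ n))
      have hΦs : StronglyMeasurable[F (n + 1)] (Φs n) :=
        ih.2.mono (hFmono (Nat.le_succ n))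
      have hconj : StronglyMeasurable[F (n + 1)] fun ω => (starRingEnd ℂ) (α n ω) := by
        exact Complex.continuous_conj.comp_stronglyMeasurable hα
      constructor
      · have : Φ (n + 1) = fun ω => z * Φ n ω - (starRingEnd ℂ) (α n ω) * Φs n ω :=
          funext (hrec n)
        rw [this]
        exact (stronglyMeasurable_const.mul hΦ).sub (hconj.mul hΦs)
      · have : Φs (n + 1) = fun ω => Φs n ω - α n ω * z * Φ n ω := funext (hrecs n)
        rw [this]
        exact hΦs.sub ((hα.mul stronglyMeasurable_const).mul hΦ)
  -- uniform bounds
  have hBnd : ∀ n ω, ‖Φ n ω‖ ≤ (1 + ‖z‖) ^ n ∧ ‖Φs n ω‖ ≤ (1 + ‖z‖) ^ n := by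
    intro n
    induction n with
    | zero => intro ω; simp [h0 ω, h0s ω]
    | succ n ih =>
      intro ω
      obtain ⟨h1, h2⟩ := ih ω
      have hz0 : (0 : ℝ) ≤ ‖z‖ := norm_nonneg z
      have hp0 : (0 : ℝ) ≤ (1 + ‖z‖) ^ n := by positivity
      have e1 : ‖z * Φ n ω‖ ≤ ‖z‖ * (1 + ‖z‖) ^ n := by
        rw [norm_mul]; exact mul_le_mul_of_nonneg_left h1 hz0
      have e2 : ‖(starRingEnd ℂ) (α n ω) * Φs n ω‖ ≤ 1 * (1 + ‖z‖) ^ n := by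
        rw [norm_mul, RCLike.norm_conj]
        exact mul_le_mul (hbddn n ω) h2 (norm_nonneg _) zero_le_one
      have e3 : ‖α n ω * z * Φ n ω‖ ≤ ‖z‖ * (1 + ‖z‖) ^ n := by
        rw [norm_mul, norm_mul]
        calc ‖α n ω‖ * ‖z‖ * ‖Φ n ω‖ ≤ 1 * ‖z‖ * (1 + ‖z‖) ^ n := by
              exact mul_le_mul (mul_le_mul (hbddn n ω) le_rfl hz0 zero_le_one) h1
                (norm_nonneg _) (by positivity)
          _ = ‖z‖ * (1 + ‖z‖) ^ n := by ring
      constructor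
      · rw [hrec n ω]
        calc ‖z * Φ n ω - (starRingEnd ℂ) (α n ω) * Φs n ω‖
            ≤ ‖z * Φ n ω‖ + ‖(starRingEnd ℂ) (α n ω) * Φs n ω‖ := norm_sub_le _ _
          _ ≤ ‖z‖ * (1 + ‖z‖) ^ n + 1 * (1 + ‖z‖) ^ n := add_le_add e1 e2
          _ = (1 + ‖z‖) ^ (n + 1) := by ring
      · rw [hrecs n ω]
        calc ‖Φs n ω - α n ω * z * Φ n ω‖
            ≤ ‖Φs n ω‖ + ‖α n ω * z * Φ n ω‖ := norm_sub_le _ _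
          _ ≤ (1 + ‖z‖) ^ n + ‖z‖ * (1 + ‖z‖) ^ n := add_le_add h2 e3
          _ = (1 + ‖z‖) ^ (n + 1) := by ring
  -- integrability
  have hIntΦ : ∀ n, Integrable (Φ n) μ := by
    intro n
    exact (integrable_const ((1 + ‖z‖) ^ n)).mono'
      (((hSM n).1.mono (hFle n)).aestronglyMeasurable)
      (ae_of_all _ fun ω => (hBnd n ω).1)
  have hIntΦs : ∀ n, Integrable (Φs n) μ := by
    intro n
    exact (integrable_const ((1 + ‖z‖) ^ n)).mono'
      (((hSM n).2.mono (hFle n)).aestronglyMeasurable)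
      (ae_of_all _ fun ω => (hBnd n ω).2)
  have hIntα : ∀ n, Integrable (α n) μ := by
    intro n
    exact (integrable_const (1 : ℝ)).mono'
      (hmeas n).aestronglyMeasurable (ae_of_all _ fun ω => hbddn n ω)
  -- independence of α k from F k
  have hIndepF : ∀ k, Indep (MeasurableSpace.comap (α k) inferInstance) (F k) μ := by
    intro k
    have hdisj : Disjoint ({k} : Set ℕ) {i | i < k} := by
      simp only [Set.disjoint_left, Set.mem_singleton_iff]
      rintro a rfl
      simp
    have h := indep_iSup_of_disjoint (fun j => (hmeas j).comap_le) hindep hdisj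
    have hl : (⨆ i ∈ ({k} : Set ℕ), MeasurableSpace.comap (α i) inferInstance)
        = MeasurableSpace.comap (α k) inferInstance := by simp
    have hr : (⨆ i ∈ ({i | i < k} : Set ℕ), MeasurableSpace.comap (α i) inferInstance)
        = F k := by
      rw [hF k]
      exact iSup_congr fun i => by simp [Finset.mem_range]
    rwa [hl, hr] at h
  -- the one-step martingale property
  have key : ∀ k, μ[Φs (k + 1) | F k] =ᵐ[μ] Φs k := by
    intro k
    set G : Ω → ℂ := fun ω => z * Φ k ω with hG
    have hGSM : StronglyMeasurable[F k] G := stronglyMeasurable_const.mul (hSM k).1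
    have hGint : Integrable G μ := (hIntΦ k).const_mul z
    have hWeq : Φs (k + 1) = fun ω => Φs k ω - α k ω * G ω := by
      funext ω; rw [hrecs k ω, hG]; ring
    have hWb : ∀ ω, ‖α k ω * G ω‖ ≤ ‖z‖ * (1 + ‖z‖) ^ k := by
      intro ω
      rw [norm_mul, hG, norm_mul]
      calc ‖α k ω‖ * (‖z‖ * ‖Φ k ω‖) ≤ 1 * (‖z‖ * (1 + ‖z‖) ^ k) := by
            refine mul_le_mul (hbddn k ω) ?_ (by positivity) zero_le_one
            exact mul_le_mul_of_nonneg_left (hBnd k ω).1 (norm_nonneg z)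
        _ = ‖z‖ * (1 + ‖z‖) ^ k := one_mul _
    have hWint : Integrable (fun ω => α k ω * G ω) μ :=
      (integrable_const (‖z‖ * (1 + ‖z‖) ^ k)).mono'
        ((hmeas k).aestronglyMeasurable.mul
          ((hGSM.mono (hFle k)).aestronglyMeasurable)) (ae_of_all _ hWb)
    -- conditional expectation of α k * G given F k is 0
    have hzero : (0 : Ω → ℂ) =ᵐ[μ] μ[fun ω => α k ω * G ω | F k] := by
      refine ae_eq_condExp_of_forall_setIntegral_eq (hFle k) hWint
        (fun s _ _ => (integrable_zero _ _ _).integrableOn) (fun s hs hμs => ?_)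
        (stronglyMeasurable_zero.aestronglyMeasurable)
      have hsm : MeasurableSet s := hFle k s hs
      have hind : ∫ ω in s, α k ω * G ω ∂μ
          = ∫ ω, α k ω * Set.indicator s G ω ∂μ := by
        rw [← integral_indicator hsm]
        congr 1
        funext ω
        by_cases hωs : ω ∈ s <;> simp [Set.indicator, hωs]
      have hYSM : StronglyMeasurable[F k] (Set.indicator s G) := hGSM.indicator hs
      have hIF : IndepFun (α k) (Set.indicator s G) μ := by
        rw [IndepFun_iff_Indep]
        exact indep_of_indep_of_le_right (hIndepF k) hYSM.measurable.comap_le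
      have hYint : Integrable (Set.indicator s G) μ := hGint.indicator hsm
      rw [hind, aux_integral_mul_complex hIF (hIntα k) hYint, hmean k, zero_mul]
      simp
    have h1 : μ[Φs (k + 1) | F k]
        =ᵐ[μ] μ[Φs k | F k] - μ[fun ω => α k ω * G ω | F k] := by
      rw [hWeq]
      exact condExp_sub (hIntΦs k) hWint (F k)
    have h2 : μ[Φs k | F k] = Φs k :=
      condExp_of_stronglyMeasurable (hFle k) (hSM k).2 (hIntΦs k)
    refine h1.trans ?_
    rw [h2]
    filter_upwards [hzero] with ω hω
    simp [Pi.sub_apply, ← hω]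
  -- conclude by induction using the tower property
  intro n j hnj
  induction j, hnj using Nat.le_induction with
  | base =>
    rw [condExp_of_stronglyMeasurable (hFle n) (hSM n).2 (hIntΦs n)]
  | succ j hnj ih =>
    have htower : μ[μ[Φs (j + 1) | F j] | F n] =ᵐ[μ] μ[Φs (j + 1) | F n] :=
      condExp_condExp_of_le (hFmono hnj) (hFle j)
    calc μ[Φs (j + 1) | F n]
        =ᵐ[μ] μ[μ[Φs (j + 1) | F j] | F n] := htower.symm
      _ =ᵐ[μ] μ[Φs j | F n] := condExp_congr_ae (key j)
      _ =ᵐ[μ] Φs n := ih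
end

section
/- Bernstein-type discretization: if p is a polynomial of degree at most N and |p(ζ)| ≤ C at all the M-th roots of unity ζ with M ≥ 2N (sufficiently fine spacing relative to the degree), then ‖p‖_{L^∞(𝕋)} ≤ C' · C for an absolute constant C'. -/
open Finset Complex

namespace Stmt13

noncomputable def D (m : ℕ) (w : ℂ) : ℂ := ∑ x ∈ Finset.range m, w ^ x



lemma rootsum {M : ℕ} (hM : 1 ≤ M) {ω : ℂ} (hω : IsPrimitiveRoot ω M) (r : ℤ) :
    ∑ k ∈ Finset.range M, ω ^ ((k : ℤ) * r) = if (M : ℤ) ∣ r then (M : ℂ) else 0 := by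
  by_cases h : (M : ℤ) ∣ r
  · rw [if_pos h]
    rw [Finset.sum_congr rfl (fun k _ => by
      rw [mul_comm, zpow_mul, (hω.zpow_eq_one_iff_dvd r).2 h, one_zpow])]
    simp
  · rw [if_neg h]
    have h1 : ω ^ r ≠ 1 := fun hh => h ((hω.zpow_eq_one_iff_dvd r).1 hh)
    rw [Finset.sum_congr rfl (fun k _ => by
      rw [mul_comm, zpow_mul, zpow_natCast] : ∀ k ∈ range M,
        ω ^ ((k:ℤ) * r) = (ω ^ r) ^ k)]
    rw [geom_sum_eq h1]
    have h2 : (ω ^ r) ^ (M : ℕ) = 1 := by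
      rw [← zpow_natCast, ← zpow_mul, mul_comm, zpow_mul, zpow_natCast, hω.pow_eq_one, one_zpow]
    rw [h2]; simp

def cnt (m s : ℕ) : ℕ := ∑ x ∈ Finset.range m, ∑ y ∈ Finset.range m, if x + y = s then 1 else 0

lemma cnt_eq (m s : ℕ) : cnt m s = min (s + 1) m - (s + 1 - m) := by
  unfold cnt
  have h1 : ∀ x, (∑ y ∈ Finset.range m, if x + y = s then (1:ℕ) else 0)
      = if x ≤ s ∧ s - x < m then 1 else 0 := by
    intro x
    rw [Finset.sum_congr rfl (fun y _ => (by split_ifs <;> omega :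
      (if x + y = s then (1:ℕ) else 0) = if (x ≤ s ∧ s - x = y) then 1 else 0))]
    by_cases hx : x ≤ s
    · simp only [hx, true_and]
      rw [Finset.sum_ite_eq (range m) (s - x) (fun _ => (1:ℕ))]
      simp [Finset.mem_range]
    · simp [hx]
  rw [Finset.sum_congr rfl (fun x _ => h1 x), Finset.sum_boole]
  have : Finset.filter (fun x => x ≤ s ∧ s - x < m) (Finset.range m)
      = Finset.Ico (s + 1 - m) (min (s + 1) m) := by
    ext x
    simp only [Finset.mem_filter, Finset.mem_range, Finset.mem_Ico, lt_min_iff]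
    omega
  rw [this, Nat.card_Ico]; simp

lemma cnt_key {n j : ℕ} (hj : j ≤ 2 * n + 2) :
    cnt (2 * n + 2) (j + n)
      = (∑ x ∈ Finset.range (n + 1), ∑ y ∈ Finset.range (n + 1),
          if x + y + 1 = j then 1 else 0) + (n + 1) := by
  rcases j with _ | j'
  · have : (∑ x ∈ Finset.range (n + 1), ∑ y ∈ Finset.range (n + 1),
        if x + y + 1 = 0 then (1:ℕ) else 0) = 0 := by simp
    rw [this, cnt_eq]; omega
  · have : (∑ x ∈ Finset.range (n + 1), ∑ y ∈ Finset.range (n + 1),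
        if x + y + 1 = j' + 1 then (1:ℕ) else 0) = cnt (n+1) j' := by
      unfold cnt
      refine Finset.sum_congr rfl fun x _ => Finset.sum_congr rfl fun y _ => ?_
      exact if_congr (by omega) rfl rfl
    rw [this, cnt_eq, cnt_eq]; omega

lemma hD {ω z : ℂ} (m : ℕ) : ∀ k : ℕ, D m (z * (ω ^ k)⁻¹)
    = ∑ x ∈ Finset.range m, z ^ x * ω ^ (-((k:ℤ) * (x:ℤ))) := by
  intro k; unfold D
  refine Finset.sum_congr rfl fun x _ => ?_
  rw [mul_pow, inv_pow, ← pow_mul, ← zpow_natCast ω (k * x), ← zpow_neg]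
  push_cast; ring_nf

lemma SUM1 {M : ℕ} (hM : 1 ≤ M) {ω z : ℂ} (hω : IsPrimitiveRoot ω M)
    (m : ℕ) (hm : m ≤ M) (j : ℕ) (hj : j < m) :
    ∑ k ∈ Finset.range M, ω ^ ((k:ℤ) * (j:ℤ)) * D m (z * (ω ^ k)⁻¹)
      = (M : ℂ) * z ^ j := by
  have hω0 : ω ≠ 0 := hω.ne_zero (by omega)
  have hstep : ∀ k x : ℕ, ω ^ ((k:ℤ) * (j:ℤ)) * (z ^ x * ω ^ (-((k:ℤ) * (x:ℤ))))
      = z ^ x * ω ^ ((k:ℤ) * ((j:ℤ) - (x:ℤ))) := by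
    intro k x
    have e : (k:ℤ) * ((j:ℤ) - (x:ℤ)) = (k:ℤ) * (j:ℤ) + -((k:ℤ) * (x:ℤ)) := by ring
    rw [e, zpow_add₀ hω0]; ring
  calc ∑ k ∈ Finset.range M, ω ^ ((k:ℤ) * (j:ℤ)) * D m (z * (ω ^ k)⁻¹)
      = ∑ k ∈ Finset.range M, ∑ x ∈ Finset.range m,
          z ^ x * ω ^ ((k:ℤ) * ((j:ℤ) - (x:ℤ))) := by
        refine Finset.sum_congr rfl fun k _ => ?_
        rw [hD, Finset.mul_sum]
        exact Finset.sum_congr rfl fun x _ => hstep k x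
    _ = ∑ x ∈ Finset.range m, z ^ x *
          ∑ k ∈ Finset.range M, ω ^ ((k:ℤ) * ((j:ℤ) - (x:ℤ))) := by
        rw [Finset.sum_comm]
        exact Finset.sum_congr rfl fun x _ => by rw [Finset.mul_sum]
    _ = ∑ x ∈ Finset.range m, z ^ x *
          (if (M:ℤ) ∣ ((j:ℤ) - (x:ℤ)) then (M:ℂ) else 0) := by
        exact Finset.sum_congr rfl fun x _ => by rw [rootsum hM hω]
    _ = ∑ x ∈ Finset.range m, (if x = j then (M:ℂ) * z ^ j else 0) := by
        refine Finset.sum_congr rfl fun x hx => ?_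
        rw [Finset.mem_range] at hx
        by_cases h : x = j
        · subst h; simp [mul_comm]
        · rw [if_neg h, if_neg, mul_zero]
          intro hdvd
          have h1 : (j:ℤ) - (x:ℤ) ≠ 0 := by
            intro hc; exact h (by omega)
          have h2 := Int.le_of_dvd (abs_pos.2 h1) ((dvd_abs _ _).2 hdvd)
          have h3 : |(j:ℤ) - (x:ℤ)| < (M:ℤ) := abs_lt.2 ⟨by omega, by omega⟩
          exact absurd h2 (not_le.2 h3)
    _ = (M:ℂ) * z ^ j := by
        rw [Finset.sum_ite_eq' (Finset.range m) j]
        simp [Finset.mem_range.2 hj]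


lemma SUM2 {M : ℕ} (hM : 1 ≤ M) {ω z : ℂ} (hω : IsPrimitiveRoot ω M)
    (m : ℕ) (r : ℤ)
    (hcond : ∀ s : ℕ, s + 2 ≤ 2 * m → ((M:ℤ) ∣ r - (s:ℤ) → (s:ℤ) = r)) :
    ∑ k ∈ Finset.range M, ω ^ ((k:ℤ) * r) * (D m (z * (ω ^ k)⁻¹)) ^ 2
      = (M:ℂ) * (∑ x ∈ Finset.range m, ∑ y ∈ Finset.range m,
          if ((x:ℤ) + (y:ℤ) = r) then (1:ℂ) else 0) * z ^ r := by
  have hω0 : ω ≠ 0 := hω.ne_zero (by omega)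
  have hstep : ∀ k x y : ℕ,
      ω ^ ((k:ℤ) * r) * ((z ^ x * ω ^ (-((k:ℤ) * (x:ℤ)))) * (z ^ y * ω ^ (-((k:ℤ) * (y:ℤ)))))
      = z ^ (x + y) * ω ^ ((k:ℤ) * (r - (x:ℤ) - (y:ℤ))) := by
    intro k x y
    have e : (k:ℤ) * (r - (x:ℤ) - (y:ℤ))
        = (k:ℤ) * r + (-((k:ℤ) * (x:ℤ)) + -((k:ℤ) * (y:ℤ))) := by ring
    rw [e, zpow_add₀ hω0, zpow_add₀ hω0, pow_add]; ring
  calc ∑ k ∈ Finset.range M, ω ^ ((k:ℤ) * r) * (D m (z * (ω ^ k)⁻¹)) ^ 2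
      = ∑ k ∈ Finset.range M, ∑ x ∈ Finset.range m, ∑ y ∈ Finset.range m,
          z ^ (x + y) * ω ^ ((k:ℤ) * (r - (x:ℤ) - (y:ℤ))) := by
        refine Finset.sum_congr rfl fun k _ => ?_
        rw [hD, sq, Finset.sum_mul_sum, Finset.mul_sum]
        refine Finset.sum_congr rfl fun x _ => ?_
        rw [Finset.mul_sum]
        exact Finset.sum_congr rfl fun y _ => hstep k x y
    _ = ∑ x ∈ Finset.range m, ∑ y ∈ Finset.range m, z ^ (x + y) *
          ∑ k ∈ Finset.range M, ω ^ ((k:ℤ) * (r - (x:ℤ) - (y:ℤ))) := by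
        rw [Finset.sum_comm]
        refine Finset.sum_congr rfl fun x _ => ?_
        rw [Finset.sum_comm]
        exact Finset.sum_congr rfl fun y _ => by rw [Finset.mul_sum]
    _ = ∑ x ∈ Finset.range m, ∑ y ∈ Finset.range m,
          (if ((x:ℤ) + (y:ℤ) = r) then (M:ℂ) * z ^ r else 0) := by
        refine Finset.sum_congr rfl fun x hx => Finset.sum_congr rfl fun y hy => ?_
        rw [Finset.mem_range] at hx hy
        rw [rootsum hM hω]
        by_cases h : (x:ℤ) + (y:ℤ) = r
        · rw [if_pos h, if_pos (by rw [show r - (x:ℤ) - (y:ℤ) = 0 by omega]; exact dvd_zero _)]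
          have hxy : z ^ (x + y) = z ^ r := by
            rw [← zpow_natCast z (x + y), show ((x + y : ℕ):ℤ) = r by push_cast; omega]
          rw [hxy]; ring
        · rw [if_neg h, if_neg, mul_zero]
          intro hdvd
          have hdvd' : (M:ℤ) ∣ r - ((x + y : ℕ):ℤ) := by
            push_cast; rw [← sub_sub]; exact hdvd
          have : ((x + y : ℕ):ℤ) = r := hcond (x + y) (by omega) hdvd'
          exact h (by push_cast at this; omega)
    _ = (M:ℂ) * (∑ x ∈ Finset.range m, ∑ y ∈ Finset.range m,
          if ((x:ℤ) + (y:ℤ) = r) then (1:ℂ) else 0) * z ^ r := by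
        simp only [Finset.mul_sum, Finset.sum_mul]
        refine Finset.sum_congr rfl fun x _ => ?_
        refine Finset.sum_congr rfl fun y _ => ?_
        split_ifs <;> ring

noncomputable def Q (n : ℕ) (w : ℂ) : ℂ :=
  2 / (2 * n + 2) * (D (2 * n + 2) w) ^ 2 - 1 / (n + 1) * w ^ (n + 1) * (D (n + 1) w) ^ 2

lemma dvd_small {M : ℕ} {a : ℤ} (h : (M:ℤ) ∣ a) (h2 : |a| < M) : a = 0 := by
  by_contra h0
  exact absurd (Int.le_of_dvd (abs_pos.2 h0) ((dvd_abs _ _).2 h)) (not_le.2 h2)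

lemma KEY {M n : ℕ} (hM : 3 * n + 2 < M) {ω z : ℂ} (hω : IsPrimitiveRoot ω M)
    (hz : z ≠ 0) {j : ℕ} (hj : j ≤ 2 * n + 2) :
    ∑ k ∈ Finset.range M, ω ^ ((k:ℤ) * ((j:ℤ) + (n:ℤ))) * Q n (z * (ω ^ k)⁻¹)
      = (M:ℂ) * z ^ (j + n) := by
  have hM1 : 1 ≤ M := by omega
  have hω0 : ω ≠ 0 := hω.ne_zero (by omega)
  set r : ℤ := (j:ℤ) + (n:ℤ) with hr
  -- power helper
  have hpow : ∀ k : ℕ, (z * (ω ^ k)⁻¹) ^ (n + 1)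
      = z ^ (n + 1) * ω ^ (-((k:ℤ) * ((n:ℤ) + 1))) := by
    intro k
    rw [mul_pow, inv_pow, ← pow_mul, ← zpow_natCast ω (k * (n + 1)), ← zpow_neg]
    push_cast; ring_nf
  -- split the sum
  have step1 : ∑ k ∈ Finset.range M, ω ^ ((k:ℤ) * r) * Q n (z * (ω ^ k)⁻¹)
      = 2 / (2 * (n:ℂ) + 2) * (∑ k ∈ Finset.range M, ω ^ ((k:ℤ) * r) * (D (2 * n + 2) (z * (ω ^ k)⁻¹)) ^ 2)
        - 1 / ((n:ℂ) + 1) * z ^ (n + 1) *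
          (∑ k ∈ Finset.range M, ω ^ ((k:ℤ) * ((j:ℤ) - 1)) * (D (n + 1) (z * (ω ^ k)⁻¹)) ^ 2) := by
    rw [Finset.mul_sum, Finset.mul_sum, ← Finset.sum_sub_distrib]
    refine Finset.sum_congr rfl fun k _ => ?_
    have merge : ω ^ ((k:ℤ) * r) * ω ^ (-((k:ℤ) * ((n:ℤ) + 1))) = ω ^ ((k:ℤ) * ((j:ℤ) - 1)) := by
      rw [← zpow_add₀ hω0]; congr 1; rw [hr]; ring
    unfold Q
    rw [hpow k, ← merge]
    push_cast
    ring
  rw [step1]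
  -- first sum via SUM2
  have hcond1 : ∀ s : ℕ, s + 2 ≤ 2 * (2 * n + 2) → ((M:ℤ) ∣ r - (s:ℤ) → (s:ℤ) = r) := by
    intro s hs hdvd
    have h0 : r - (s:ℤ) = 0 := dvd_small hdvd (abs_lt.2 ⟨by omega, by omega⟩)
    omega
  have hcond2 : ∀ s : ℕ, s + 2 ≤ 2 * (n + 1) → ((M:ℤ) ∣ ((j:ℤ) - 1) - (s:ℤ) → (s:ℤ) = (j:ℤ) - 1) := by
    intro s hs hdvd
    have h0 : ((j:ℤ) - 1) - (s:ℤ) = 0 := dvd_small hdvd (abs_lt.2 ⟨by omega, by omega⟩)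
    omega
  rw [SUM2 hM1 hω (2 * n + 2) r hcond1, SUM2 hM1 hω (n + 1) ((j:ℤ) - 1) hcond2]
  have hS1 : (∑ x ∈ Finset.range (2 * n + 2), ∑ y ∈ Finset.range (2 * n + 2),
      if ((x:ℤ) + (y:ℤ) = r) then (1:ℂ) else 0) = ((cnt (2 * n + 2) (j + n) : ℕ) : ℂ) := by
    unfold cnt
    push_cast
    refine Finset.sum_congr rfl fun x _ => Finset.sum_congr rfl fun y _ => ?_
    refine if_congr ?_ rfl rfl
    rw [hr]; constructor <;> (intro h; omega)
  have hS2 : (∑ x ∈ Finset.range (n + 1), ∑ y ∈ Finset.range (n + 1),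
      if ((x:ℤ) + (y:ℤ) = (j:ℤ) - 1) then (1:ℂ) else 0)
      = ((∑ x ∈ Finset.range (n + 1), ∑ y ∈ Finset.range (n + 1),
          if x + y + 1 = j then 1 else 0 : ℕ) : ℂ) := by
    push_cast
    refine Finset.sum_congr rfl fun x _ => Finset.sum_congr rfl fun y _ => ?_
    refine if_congr ?_ rfl rfl
    constructor <;> (intro h; omega)
  have hzp : z ^ (n + 1) * z ^ ((j:ℤ) - 1) = z ^ r := by
    rw [← zpow_natCast z (n + 1), ← zpow_add₀ hz]
    congr 1
    rw [hr]; push_cast; ring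
  have hzr : z ^ r = z ^ (j + n) := by
    rw [hr, show (j:ℤ) + (n:ℤ) = ((j + n : ℕ):ℤ) by push_cast; ring, zpow_natCast]
  have e2 : (1:ℂ) / ((n:ℂ) + 1) * z ^ (n + 1) *
      ((M:ℂ) * (∑ x ∈ Finset.range (n + 1), ∑ y ∈ Finset.range (n + 1),
        if ((x:ℤ) + (y:ℤ) = (j:ℤ) - 1) then (1:ℂ) else 0) * z ^ ((j:ℤ) - 1))
      = (1:ℂ) / ((n:ℂ) + 1) * ((M:ℂ) * (∑ x ∈ Finset.range (n + 1), ∑ y ∈ Finset.range (n + 1),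
        if ((x:ℤ) + (y:ℤ) = (j:ℤ) - 1) then (1:ℂ) else 0) * z ^ r) := by
    rw [← hzp]; ring
  rw [e2, hS1, hS2, cnt_key hj, hzr]
  have hn1 : ((n:ℂ) + 1) ≠ 0 := Nat.cast_add_one_ne_zero n
  have hn2 : (2 * (n:ℂ) + 2) ≠ 0 := by
    intro h; apply hn1; linear_combination h / 2
  push_cast
  set S : ℂ := (∑ x ∈ Finset.range (n + 1), ∑ y ∈ Finset.range (n + 1),
      if x + y + 1 = j then (1:ℂ) else 0) with hSdef
  field_simp
  ring

lemma conj_eq_inv {w : ℂ} (hw : ‖w‖ = 1) : (starRingEnd ℂ) w = w⁻¹ := by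
  rw [Complex.inv_def, show Complex.normSq w = 1 by rw [Complex.normSq_eq_norm_sq, hw]; norm_num]
  simp

lemma SUMSQ {M : ℕ} (hM : 1 ≤ M) {ω z : ℂ} (hω : IsPrimitiveRoot ω M)
    (hωa : ‖ω‖ = 1) (hza : ‖z‖ = 1) (m : ℕ) (hm : m ≤ M) :
    ∑ k ∈ Finset.range M, (‖D m (z * (ω ^ k)⁻¹)‖) ^ 2 = (m : ℝ) * M := by
  have hω0 : ω ≠ 0 := hω.ne_zero (by omega)
  have hz0 : z ≠ 0 := by intro h; rw [h] at hza; simp at hza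
  have hconjD : ∀ k : ℕ, (starRingEnd ℂ) (D m (z * (ω ^ k)⁻¹))
      = ∑ y ∈ Finset.range m, z ^ (-(y:ℤ)) * ω ^ ((k:ℤ) * (y:ℤ)) := by
    intro k
    rw [hD, map_sum]
    refine Finset.sum_congr rfl fun y _ => ?_
    rw [map_mul, map_pow, conj_eq_inv hza, map_zpow₀, conj_eq_inv hωa]
    rw [inv_pow, ← zpow_natCast z y, ← zpow_neg, inv_zpow, ← zpow_neg, neg_neg]
  have main : ∑ k ∈ Finset.range M,
      (D m (z * (ω ^ k)⁻¹)) * (starRingEnd ℂ) (D m (z * (ω ^ k)⁻¹)) = ((m : ℂ) * M) := by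
    have hstep : ∀ k x y : ℕ,
        (z ^ x * ω ^ (-((k:ℤ) * (x:ℤ)))) * (z ^ (-(y:ℤ)) * ω ^ ((k:ℤ) * (y:ℤ)))
        = z ^ ((x:ℤ) - (y:ℤ)) * ω ^ ((k:ℤ) * ((y:ℤ) - (x:ℤ))) := by
      intro k x y
      rw [← zpow_natCast z x,
        show (x:ℤ) - (y:ℤ) = (x:ℤ) + -(y:ℤ) by ring, zpow_add₀ hz0,
        show (k:ℤ) * ((y:ℤ) - (x:ℤ)) = -((k:ℤ) * (x:ℤ)) + (k:ℤ) * (y:ℤ) by ring,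
        zpow_add₀ hω0]
      ring
    calc ∑ k ∈ Finset.range M,
        (D m (z * (ω ^ k)⁻¹)) * (starRingEnd ℂ) (D m (z * (ω ^ k)⁻¹))
        = ∑ k ∈ Finset.range M, ∑ x ∈ Finset.range m, ∑ y ∈ Finset.range m,
            z ^ ((x:ℤ) - (y:ℤ)) * ω ^ ((k:ℤ) * ((y:ℤ) - (x:ℤ))) := by
          refine Finset.sum_congr rfl fun k _ => ?_
          rw [hconjD, hD, Finset.sum_mul_sum]
          exact Finset.sum_congr rfl fun x _ => Finset.sum_congr rfl fun y _ => hstep k x y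
      _ = ∑ x ∈ Finset.range m, ∑ y ∈ Finset.range m, z ^ ((x:ℤ) - (y:ℤ)) *
            ∑ k ∈ Finset.range M, ω ^ ((k:ℤ) * ((y:ℤ) - (x:ℤ))) := by
          rw [Finset.sum_comm]
          refine Finset.sum_congr rfl fun x _ => ?_
          rw [Finset.sum_comm]
          exact Finset.sum_congr rfl fun y _ => by rw [Finset.mul_sum]
      _ = ∑ x ∈ Finset.range m, ∑ y ∈ Finset.range m,
            (if y = x then (M:ℂ) else 0) := by
          refine Finset.sum_congr rfl fun x hx => Finset.sum_congr rfl fun y hy => ?_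
          rw [Finset.mem_range] at hx hy
          rw [rootsum hM hω]
          by_cases h : y = x
          · subst h
            simp
          · rw [if_neg h, if_neg, mul_zero]
            intro hdvd
            have := dvd_small hdvd (abs_lt.2 ⟨by omega, by omega⟩)
            exact h (by omega)
      _ = ((m : ℂ) * M) := by
          rw [Finset.sum_congr rfl fun x hx => Finset.sum_ite_eq' (Finset.range m) x (fun _ => (M:ℂ))]
          rw [Finset.sum_congr rfl fun x hx => if_pos hx]
          rw [Finset.sum_const, Finset.card_range, nsmul_eq_mul]
  have cast_eq : ((∑ k ∈ Finset.range M, (‖D m (z * (ω ^ k)⁻¹)‖) ^ 2 : ℝ) : ℂ)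
      = ((m : ℂ) * M) := by
    rw [← main]
    push_cast
    refine Finset.sum_congr rfl fun k _ => ?_
    rw [← Complex.ofReal_pow, Complex.sq_norm, Complex.mul_conj]
  exact_mod_cast cast_eq

lemma Qbound {n : ℕ} {w : ℂ} (hw : ‖w‖ = 1) :
    ‖Q n w‖ ≤ 2 / (2 * (n:ℝ) + 2) * (‖D (2 * n + 2) w‖) ^ 2
      + 1 / ((n:ℝ) + 1) * (‖D (n + 1) w‖) ^ 2 := by
  unfold Q
  refine le_trans (norm_sub_le _ _) ?_
  have h1 : ‖2 / (2 * (n:ℂ) + 2) * (D (2 * n + 2) w) ^ 2‖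
      = 2 / (2 * (n:ℝ) + 2) * (‖D (2 * n + 2) w‖) ^ 2 := by
    rw [norm_mul, norm_pow, norm_div]
    congr 2
    · exact Complex.norm_two
    · rw [show 2 * (n:ℂ) + 2 = (((2 * (n:ℝ) + 2 : ℝ)) : ℂ) by push_cast; ring,
        Complex.norm_real, Real.norm_of_nonneg (by positivity)]
  have h2 : ‖1 / ((n:ℂ) + 1) * w ^ (n + 1) * (D (n + 1) w) ^ 2‖
      = 1 / ((n:ℝ) + 1) * (‖D (n + 1) w‖) ^ 2 := by
    rw [norm_mul, norm_mul, norm_pow, norm_pow, hw, one_pow, norm_div, norm_one]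
    rw [show (n:ℂ) + 1 = (((n:ℝ) + 1 : ℝ) : ℂ) by push_cast; ring,
      Complex.norm_real, Real.norm_of_nonneg (by positivity)]
    ring
  rw [h1, h2]

lemma absD_le (m : ℕ) (w : ℂ) (hw : ‖w‖ = 1) : ‖D m w‖ ≤ (m:ℝ) := by
  unfold D
  refine le_trans (norm_sum_le _ _) ?_
  rw [Finset.sum_congr rfl fun x _ => by rw [norm_pow, hw, one_pow]]
  simp

end Stmt13

open Stmt13 in
/-- Bernstein-type discretization: there is an absolute constant `C'` such that any
polynomial of degree `≤ N` bounded by `C` at the `M`-th roots of unity, `M ≥ 2N`,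
is bounded by `C' · C` on the whole unit circle. -/
theorem stmt_13 : ∃ C' : ℝ, 0 < C' ∧
    ∀ (N M : ℕ) (p : Polynomial ℂ) (C : ℝ),
      p.natDegree ≤ N → 2 * N ≤ M → 1 ≤ M →
      (∀ k < M, ‖p.eval (Complex.exp (2 * Real.pi * Complex.I * k / M))‖ ≤ C) →
      ∀ z : ℂ, ‖z‖ = 1 → ‖p.eval z‖ ≤ C' * C := by
  refine ⟨3, by norm_num, ?_⟩
  intro N M p C hdeg hMN hM1 hC z hz1
  have hz0 : z ≠ 0 := by intro h; rw [h] at hz1; simp at hz1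
  set ω : ℂ := Complex.exp (2 * ↑Real.pi * Complex.I / ↑M) with hωdef
  have hω : IsPrimitiveRoot ω M := Complex.isPrimitiveRoot_exp M (by omega)
  have hω0 : ω ≠ 0 := hω.ne_zero (by omega)
  have hωa : ‖ω‖ = 1 := by
    have h1 : ‖ω‖ ^ M = 1 := by rw [← norm_pow, hω.pow_eq_one, norm_one]
    rcases lt_trichotomy (‖ω‖) 1 with hl | he | hg
    · have := pow_lt_one₀ (norm_nonneg _) hl (by omega : M ≠ 0); linarith
    · exact he
    · have := one_lt_pow₀ hg (by omega : M ≠ 0); linarith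
  have hCk : ∀ k, k < M → ‖p.eval (ω ^ k)‖ ≤ C := by
    intro k hk
    have e : ω ^ k = Complex.exp (2 * ↑Real.pi * Complex.I * ↑k / ↑M) := by
      rw [hωdef, ← Complex.exp_nat_mul]
      congr 1
      ring
    rw [e]; exact hC k hk
  have hC0 : 0 ≤ C := le_trans (norm_nonneg _) (hCk 0 (by omega))
  have habsw : ∀ k : ℕ, ‖z * (ω ^ k)⁻¹‖ = 1 := by
    intro k
    rw [norm_mul, norm_inv, norm_pow, hωa, one_pow, inv_one, hz1, mul_one]
  have hMR : (0:ℝ) < (M:ℝ) := by exact_mod_cast (by omega : 0 < M)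
  have hdeg' : p.natDegree < N + 1 := by omega
  by_cases hsmall : N ≤ 1
  · -- small-degree case: plain Dirichlet kernel
    have hm : N + 1 ≤ M := by omega
    have master : ∑ k ∈ Finset.range M, p.eval (ω ^ k) * D (N+1) (z * (ω ^ k)⁻¹)
        = (M:ℂ) * p.eval z := by
      calc ∑ k ∈ Finset.range M, p.eval (ω ^ k) * D (N+1) (z * (ω ^ k)⁻¹)
          = ∑ k ∈ Finset.range M, ∑ j ∈ Finset.range (N+1),
              p.coeff j * (ω ^ ((k:ℤ) * (j:ℤ)) * D (N+1) (z * (ω ^ k)⁻¹)) := by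
            refine Finset.sum_congr rfl fun k _ => ?_
            rw [Polynomial.eval_eq_sum_range' hdeg', Finset.sum_mul]
            refine Finset.sum_congr rfl fun j _ => ?_
            rw [show ω ^ ((k:ℤ) * (j:ℤ)) = ω ^ ((k * j : ℕ):ℤ) by push_cast; ring,
              zpow_natCast, pow_mul]
            ring
        _ = ∑ j ∈ Finset.range (N+1), p.coeff j *
              ∑ k ∈ Finset.range M, ω ^ ((k:ℤ) * (j:ℤ)) * D (N+1) (z * (ω ^ k)⁻¹) := by
            rw [Finset.sum_comm]
            exact Finset.sum_congr rfl fun j _ => by rw [Finset.mul_sum]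
        _ = ∑ j ∈ Finset.range (N+1), p.coeff j * ((M:ℂ) * z ^ j) := by
            refine Finset.sum_congr rfl fun j hj => ?_
            rw [Finset.mem_range] at hj
            rw [SUM1 (by omega) hω (N+1) hm j hj]
        _ = (M:ℂ) * p.eval z := by
            rw [Polynomial.eval_eq_sum_range' hdeg', Finset.mul_sum]
            exact Finset.sum_congr rfl fun j _ => by ring
    have bound : (M:ℝ) * ‖p.eval z‖ ≤ (M:ℝ) * (3 * C) := by
      calc (M:ℝ) * ‖p.eval z‖
          = ‖(M:ℂ) * p.eval z‖ := by
            rw [norm_mul, Complex.norm_natCast]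
        _ = ‖∑ k ∈ Finset.range M, p.eval (ω ^ k) * D (N+1) (z * (ω ^ k)⁻¹)‖ := by
            rw [master]
        _ ≤ ∑ k ∈ Finset.range M, ‖p.eval (ω ^ k) * D (N+1) (z * (ω ^ k)⁻¹)‖ :=
            norm_sum_le _ _
        _ ≤ ∑ _k ∈ Finset.range M, C * 2 := by
            refine Finset.sum_le_sum fun k hk => ?_
            rw [Finset.mem_range] at hk
            rw [norm_mul]
            have h2 : ‖D (N+1) (z * (ω ^ k)⁻¹)‖ ≤ 2 := by
              refine le_trans (absD_le (N+1) _ (habsw k)) ?_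
              exact_mod_cast (by omega : N + 1 ≤ 2)
            exact mul_le_mul (hCk k hk) h2 (norm_nonneg _) hC0
        _ ≤ (M:ℝ) * (3 * C) := by
            rw [Finset.sum_const, Finset.card_range, nsmul_eq_mul]
            nlinarith
    have := le_of_mul_le_mul_left bound hMR
    linarith
  · -- main case: de la Vallée Poussin kernel
    set n : ℕ := (N - 1) / 2 with hn
    have hn1 : 2 * n + 1 ≤ N := by omega
    have hn2 : N ≤ 2 * n + 2 := by omega
    have hM3 : 3 * n + 2 < M := by omega
    have master : ∑ k ∈ Finset.range M,
        p.eval (ω ^ k) * (ω ^ ((k:ℤ) * (n:ℤ)) * Q n (z * (ω ^ k)⁻¹))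
        = (M:ℂ) * (z ^ n * p.eval z) := by
      calc ∑ k ∈ Finset.range M,
            p.eval (ω ^ k) * (ω ^ ((k:ℤ) * (n:ℤ)) * Q n (z * (ω ^ k)⁻¹))
          = ∑ k ∈ Finset.range M, ∑ j ∈ Finset.range (N+1),
              p.coeff j * (ω ^ ((k:ℤ) * ((j:ℤ) + (n:ℤ))) * Q n (z * (ω ^ k)⁻¹)) := by
            refine Finset.sum_congr rfl fun k _ => ?_
            rw [Polynomial.eval_eq_sum_range' hdeg', Finset.sum_mul]
            refine Finset.sum_congr rfl fun j _ => ?_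
            rw [show ω ^ ((k:ℤ) * ((j:ℤ) + (n:ℤ)))
                = ω ^ ((k * j : ℕ):ℤ) * ω ^ ((k:ℤ) * (n:ℤ)) by
              rw [← zpow_add₀ hω0]; congr 1; push_cast; ring]
            rw [zpow_natCast, pow_mul]
            ring
        _ = ∑ j ∈ Finset.range (N+1), p.coeff j *
              ∑ k ∈ Finset.range M, ω ^ ((k:ℤ) * ((j:ℤ) + (n:ℤ))) * Q n (z * (ω ^ k)⁻¹) := by
            rw [Finset.sum_comm]
            exact Finset.sum_congr rfl fun j _ => by rw [Finset.mul_sum]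
        _ = ∑ j ∈ Finset.range (N+1), p.coeff j * ((M:ℂ) * z ^ (j + n)) := by
            refine Finset.sum_congr rfl fun j hj => ?_
            rw [Finset.mem_range] at hj
            rw [KEY hM3 hω hz0 (by omega : j ≤ 2 * n + 2)]
        _ = (M:ℂ) * (z ^ n * p.eval z) := by
            rw [Polynomial.eval_eq_sum_range' hdeg',
              show (M:ℂ) * (z ^ n * ∑ j ∈ Finset.range (N+1), p.coeff j * z ^ j)
                = ∑ j ∈ Finset.range (N+1), (M:ℂ) * z ^ n * (p.coeff j * z ^ j) by
                rw [← Finset.mul_sum]; ring]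
            refine Finset.sum_congr rfl fun j _ => by rw [pow_add]; ring
    have hsum1 := SUMSQ (by omega) hω hωa hz1 (2*n+2) (by omega)
    have hsum2 := SUMSQ (by omega) hω hωa hz1 (n+1) (by omega)
    have bound : (M:ℝ) * ‖p.eval z‖ ≤ (M:ℝ) * (3 * C) := by
      calc (M:ℝ) * ‖p.eval z‖
          = ‖(M:ℂ) * (z ^ n * p.eval z)‖ := by
            rw [norm_mul, norm_mul, norm_pow, hz1, one_pow, one_mul, Complex.norm_natCast]
        _ = ‖∑ k ∈ Finset.range M,
              p.eval (ω ^ k) * (ω ^ ((k:ℤ) * (n:ℤ)) * Q n (z * (ω ^ k)⁻¹))‖ := by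
            rw [master]
        _ ≤ ∑ k ∈ Finset.range M, ‖p.eval (ω ^ k) * (ω ^ ((k:ℤ) * (n:ℤ)) * Q n (z * (ω ^ k)⁻¹))‖ :=
            norm_sum_le _ _
        _ ≤ ∑ k ∈ Finset.range M, C *
              (2 / (2 * (n:ℝ) + 2) * (‖D (2 * n + 2) (z * (ω ^ k)⁻¹)‖) ^ 2
                + 1 / ((n:ℝ) + 1) * (‖D (n + 1) (z * (ω ^ k)⁻¹)‖) ^ 2) := by
            refine Finset.sum_le_sum fun k hk => ?_
            rw [Finset.mem_range] at hk
            rw [norm_mul, norm_mul, norm_zpow, hωa, one_zpow, one_mul]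
            exact mul_le_mul (hCk k hk) (Qbound (habsw k)) (norm_nonneg _) hC0
        _ = C * (2 / (2 * (n:ℝ) + 2) *
              ∑ k ∈ Finset.range M, (‖D (2 * n + 2) (z * (ω ^ k)⁻¹)‖) ^ 2
                + 1 / ((n:ℝ) + 1) *
              ∑ k ∈ Finset.range M, (‖D (n + 1) (z * (ω ^ k)⁻¹)‖) ^ 2) := by
            rw [← Finset.mul_sum]
            congr 1
            rw [Finset.sum_add_distrib, ← Finset.mul_sum, ← Finset.mul_sum]
        _ = (M:ℝ) * (3 * C) := by
            rw [hsum1, hsum2]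
            have d1 : (2 * (n:ℝ) + 2) ≠ 0 := by positivity
            have d2 : ((n:ℝ) + 1) ≠ 0 := by positivity
            push_cast
            field_simp
            ring
    have := le_of_mul_le_mul_left bound hMR
    linarith
end

section
/- Blowup lemma: suppose {α_j} ⊂ 𝔻 and Prüfer phases γ_j(θ) satisfy (1) |γ_j(θ) − γ_j(0) − (j+1)θ| ≤ π/12 for all j and θ, (2) ∑_n |α_n| = ∞, and (3) α_j = 0 unless j = T^k for some k ≥ 0, where T ≥ 12 is an integer. Then lim_{j→∞} sup_{θ ∈ [0,2π)} |∑_{n=0}^{j} α_n e^{iγ_n(θ)}| = ∞. -/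
open Filter

/-- Nested-interval alignment lemma: given phases `c k` and lacunary frequencies `f k`
with `f 0 = 2` and `f (k+1) ≥ 5 f k`, for every `K` there is an interval of length
`(π/2)/f K` inside `[0, 2π]` on which every `c k + f k θ` (k ≤ K) is within `π/4`
of a multiple of `2π`. -/
lemma key_align (c f : ℕ → ℝ) (hf0 : f 0 = 2) (hfpos : ∀ k, 0 < f k)
    (hf : ∀ k, 5 * f k ≤ f (k + 1)) (K : ℕ) :
    ∃ a : ℝ, 0 ≤ a ∧ a + (Real.pi / 2) / f K ≤ 2 * Real.pi ∧
      ∀ k ≤ K, ∃ m : ℤ, ∀ θ ∈ Set.Icc a (a + (Real.pi / 2) / f K),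
        |c k + f k * θ - 2 * Real.pi * m| ≤ Real.pi / 4 := by
  have hπ := Real.pi_pos
  induction K with
  | zero =>
    set m : ℤ := ⌈(c 0 + Real.pi / 4) / (2 * Real.pi)⌉ with hm
    have h2π : (0:ℝ) < 2 * Real.pi := by linarith
    have hle : (c 0 + Real.pi / 4) / (2 * Real.pi) ≤ (m:ℝ) := Int.le_ceil _
    have hlt : (m:ℝ) < (c 0 + Real.pi / 4) / (2 * Real.pi) + 1 := Int.ceil_lt_add_one _
    have hle' : c 0 + Real.pi / 4 ≤ 2 * Real.pi * m := by
      rw [div_le_iff₀ h2π] at hle; linarith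
    have hlt' : 2 * Real.pi * m < c 0 + Real.pi / 4 + 2 * Real.pi := by
      have h := (lt_div_iff₀ h2π).mp (by linarith : ((m:ℝ) - 1) < (c 0 + Real.pi / 4) / (2 * Real.pi))
      linarith
    set t : ℝ := (2 * Real.pi * m - c 0) / 2 with ht
    have ht1 : Real.pi / 8 ≤ t := by rw [ht]; rw [le_div_iff₀ (by norm_num : (0:ℝ) < 2)]; linarith
    have ht2 : t ≤ Real.pi / 8 + Real.pi := by rw [ht]; rw [div_le_iff₀ (by norm_num : (0:ℝ) < 2)]; linarith
    refine ⟨t - Real.pi / 8, by linarith, ?_, ?_⟩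
    · rw [hf0]; linarith
    · intro k hk
      interval_cases k
      refine ⟨m, fun θ hθ => ?_⟩
      rw [hf0] at hθ
      obtain ⟨hθ1, hθ2⟩ := hθ
      rw [hf0, abs_le]
      constructor <;> nlinarith [hθ1, hθ2]
  | succ K ih =>
    obtain ⟨a, ha0, haub, hgood⟩ := ih
    have hfK := hfpos K
    have hfK' := hfpos (K + 1)
    have h2π : (0:ℝ) < 2 * Real.pi := by linarith
    set L' : ℝ := (Real.pi / 2) / f (K + 1) with hL'
    have hL'pos : 0 < L' := by positivity
    set m : ℤ := ⌈(c (K + 1) + f (K + 1) * (a + L' / 2)) / (2 * Real.pi)⌉ with hm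
    have hle : (c (K + 1) + f (K + 1) * (a + L' / 2)) / (2 * Real.pi) ≤ (m:ℝ) := Int.le_ceil _
    have hlt : (m:ℝ) < (c (K + 1) + f (K + 1) * (a + L' / 2)) / (2 * Real.pi) + 1 :=
      Int.ceil_lt_add_one _
    have hle' : c (K + 1) + f (K + 1) * (a + L' / 2) ≤ 2 * Real.pi * m := by
      rw [div_le_iff₀ h2π] at hle; linarith
    have hlt' : 2 * Real.pi * m < c (K + 1) + f (K + 1) * (a + L' / 2) + 2 * Real.pi := by
      have h := (lt_div_iff₀ h2π).mp (by linarith :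
        ((m:ℝ) - 1) < (c (K + 1) + f (K + 1) * (a + L' / 2)) / (2 * Real.pi))
      linarith
    set t : ℝ := (2 * Real.pi * m - c (K + 1)) / f (K + 1) with htdef
    have ht1 : a + L' / 2 ≤ t := by
      rw [htdef, le_div_iff₀ hfK']; nlinarith
    have ht2 : t ≤ a + L' / 2 + 2 * Real.pi / f (K + 1) := by
      rw [htdef, div_le_iff₀ hfK']
      have : (a + L' / 2 + 2 * Real.pi / f (K + 1)) * f (K + 1)
          = f (K + 1) * (a + L' / 2) + 2 * Real.pi := by field_simp
      rw [this]; linarith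
    -- key length comparison: t + L'/2 ≤ a + (π/2)/f K
    have hlen : t + L' / 2 ≤ a + (Real.pi / 2) / f K := by
      have h5 : 5 * f K ≤ f (K + 1) := hf K
      have : L' + 2 * Real.pi / f (K + 1) ≤ (Real.pi / 2) / f K := by
        rw [hL']
        rw [← add_div, div_le_div_iff₀ hfK' hfK]
        nlinarith
      linarith
    refine ⟨t - L' / 2, by linarith, by linarith, ?_⟩
    intro k hk
    rcases Nat.lt_or_ge k (K + 1) with hk' | hk'
    · obtain ⟨m', hm'⟩ := hgood k (Nat.lt_succ_iff.mp hk')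
      refine ⟨m', fun θ hθ => ?_⟩
      refine hm' θ ⟨by linarith [hθ.1], ?_⟩
      have := hθ.2
      linarith
    · have hk'' : k = K + 1 := le_antisymm hk hk'
      subst hk''
      refine ⟨m, fun θ hθ => ?_⟩
      obtain ⟨hθ1, hθ2⟩ := hθ
      have hft : f (K + 1) * t = 2 * Real.pi * m - c (K + 1) := by
        rw [htdef]; field_simp
      have habs : c (K + 1) + f (K + 1) * θ - 2 * Real.pi * m = f (K + 1) * (θ - t) := by
        rw [mul_sub, hft]; ring
      rw [habs, abs_le]
      have h1 : f (K + 1) * (θ - t) ≤ f (K + 1) * (L' / 2) := by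
        apply mul_le_mul_of_nonneg_left _ (le_of_lt hfK'); linarith
      have h2 : f (K + 1) * (-(L' / 2)) ≤ f (K + 1) * (θ - t) := by
        apply mul_le_mul_of_nonneg_left _ (le_of_lt hfK'); linarith
      have hfL : f (K + 1) * (L' / 2) = Real.pi / 4 := by
        rw [hL']; field_simp; ring
      have h3 : f (K + 1) * (-(L' / 2)) = -(Real.pi / 4) := by rw [mul_neg, hfL]
      constructor
      · linarith
      · linarith

/-- Blowup lemma: if the Prüfer phases satisfy `|γ j θ − γ j 0 − (j+1)θ| ≤ π/12`, the
`|α n|` are not summable, and `α j = 0` unless `j` is a power of `T` with `T ≥ 12`,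
then `sup_θ |∑_{n=0}^j α n e^{i γ n θ}| → ∞`. -/
theorem stmt_15 (T : ℕ) (hT : 12 ≤ T)
    (α : ℕ → ℂ) (hα : ∀ j, ‖α j‖ < 1)
    (γ : ℕ → ℝ → ℝ) (hcont : ∀ j, Continuous (γ j)) (hγ0 : ∀ θ, γ 0 θ = θ)
    (h1 : ∀ j θ, |γ j θ - γ j 0 - (j + 1) * θ| ≤ Real.pi / 12)
    (h2 : ¬ Summable (fun n => ‖α n‖))
    (h3 : ∀ j, (∀ k : ℕ, j ≠ T ^ k) → α j = 0) :
    ∀ M : ℝ, ∃ J : ℕ, ∀ j, J ≤ j → ∃ θ ∈ Set.Ico 0 (2 * Real.pi),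
      M ≤ ‖∑ n ∈ Finset.range (j + 1),
        α n * Complex.exp ((γ n θ : ℂ) * Complex.I)‖ := by
  intro M
  have hπ := Real.pi_pos
  have hnn : ∀ n, 0 ≤ ‖α n‖ := fun n => norm_nonneg _
  have hdiv := (not_summable_iff_tendsto_nat_atTop_of_nonneg hnn).mp h2
  obtain ⟨J, hJ⟩ := Filter.eventually_atTop.mp (hdiv.eventually_ge_atTop (2 * M))
  refine ⟨J, fun j hj => ?_⟩
  set c : ℕ → ℝ := fun k => Complex.arg (α (T ^ k)) + γ (T ^ k) 0 with hc
  set f : ℕ → ℝ := fun k => (T : ℝ) ^ k + 1 with hfdef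
  have hT' : (12:ℝ) ≤ (T:ℝ) := by exact_mod_cast hT
  have hf0 : f 0 = 2 := by norm_num [hfdef]
  have hfpos : ∀ k, 0 < f k := fun k => by positivity
  have hf5 : ∀ k, 5 * f k ≤ f (k + 1) := by
    intro k
    have h1k : (1:ℝ) ≤ (T:ℝ) ^ k := one_le_pow₀ (by linarith)
    simp only [hfdef, pow_succ]
    nlinarith
  obtain ⟨a, ha0, haub, hgood⟩ := key_align c f hf0 hfpos hf5 j
  have hLpos : 0 < (Real.pi / 2) / f j := by positivity
  refine ⟨a, ⟨ha0, by linarith⟩, ?_⟩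
  -- termwise lower bound on the real part
  have hre : ∀ n ∈ Finset.range (j + 1),
      ‖α n‖ / 2 ≤ (α n * Complex.exp ((γ n a : ℂ) * Complex.I)).re := by
    intro n hn
    have hnj : n ≤ j := Nat.lt_succ_iff.mp (Finset.mem_range.mp hn)
    by_cases hz : α n = 0
    · simp [hz]
    · -- n is a power of T
      have hpow : ∃ k : ℕ, n = T ^ k := by
        by_contra hcon
        push_neg at hcon
        exact hz (h3 n hcon)
      obtain ⟨k, hk⟩ := hpow
      subst hk
      set n := T ^ k with hk
      have hkj : k ≤ j := by
        have h2k : k < 2 ^ k := Nat.lt_two_pow_self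
        have hTk : 2 ^ k ≤ T ^ k := Nat.pow_le_pow_left (by omega) k
        omega
      -- rewrite the real part
      have hαn : α n = (‖α n‖ : ℂ) * Complex.exp (Complex.arg (α n) * Complex.I) :=
        (Complex.norm_mul_exp_arg_mul_I (α n)).symm
      have hre_eq : (α n * Complex.exp ((γ n a : ℂ) * Complex.I)).re
          = ‖α n‖ * Real.cos (Complex.arg (α n) + γ n a) := by
        conv_lhs => rw [hαn]
        rw [mul_assoc, ← Complex.exp_add, ← add_mul, ← Complex.ofReal_add,
          Complex.re_ofReal_mul, Complex.exp_ofReal_mul_I_re]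
      rw [hre_eq]
      -- the phase is aligned
      obtain ⟨m, hm⟩ := hgood k hkj
      have hmem : a ∈ Set.Icc a (a + (Real.pi / 2) / f j) := ⟨le_refl _, by linarith⟩
      have halign := hm a hmem
      have herr := h1 n a
      have hcast : ((n : ℝ) + 1) = f k := by
        rw [hfdef, hk]; push_cast; ring
      rw [hcast] at herr
      have hck : c k = Complex.arg (α n) + γ n 0 := by simp only [hc, ← hk]
      have hphase : |Complex.arg (α n) + γ n a - 2 * Real.pi * m| ≤ Real.pi / 3 := by
        have hsplit : Complex.arg (α n) + γ n a - 2 * Real.pi * m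
            = (c k + f k * a - 2 * Real.pi * m) + (γ n a - γ n 0 - f k * a) := by
          rw [hck]; ring
        rw [hsplit]
        calc |(c k + f k * a - 2 * Real.pi * m) + (γ n a - γ n 0 - f k * a)|
            ≤ |c k + f k * a - 2 * Real.pi * m| + |γ n a - γ n 0 - f k * a| := abs_add_le _ _
          _ ≤ Real.pi / 4 + Real.pi / 12 := add_le_add halign herr
          _ = Real.pi / 3 := by ring
      have hcos : (1:ℝ) / 2 ≤ Real.cos (Complex.arg (α n) + γ n a) := by
        have hper : Real.cos (Complex.arg (α n) + γ n a)
            = Real.cos (Complex.arg (α n) + γ n a - m * (2 * Real.pi)) := by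
          rw [Real.cos_sub_int_mul_two_pi]
        rw [hper]
        have habs : |Complex.arg (α n) + γ n a - m * (2 * Real.pi)| ≤ Real.pi / 3 := by
          have : Complex.arg (α n) + γ n a - (m:ℝ) * (2 * Real.pi)
              = Complex.arg (α n) + γ n a - 2 * Real.pi * m := by ring
          rw [this]; exact hphase
        rw [← Real.cos_abs]
        have := Real.cos_le_cos_of_nonneg_of_le_pi (abs_nonneg _)
          (by linarith : Real.pi / 3 ≤ Real.pi) habs
        rw [Real.cos_pi_div_three] at this
        linarith
      have := mul_le_mul_of_nonneg_left hcos (hnn n)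
      linarith
  -- assemble
  have hsum : 2 * M ≤ ∑ n ∈ Finset.range (j + 1), ‖α n‖ := hJ (j + 1) (by omega)
  calc M ≤ (∑ n ∈ Finset.range (j + 1), ‖α n‖) / 2 := by linarith
    _ = ∑ n ∈ Finset.range (j + 1), ‖α n‖ / 2 := Finset.sum_div _ _ _
    _ ≤ ∑ n ∈ Finset.range (j + 1), (α n * Complex.exp ((γ n a : ℂ) * Complex.I)).re :=
        Finset.sum_le_sum hre
    _ = (∑ n ∈ Finset.range (j + 1), α n * Complex.exp ((γ n a : ℂ) * Complex.I)).re :=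
        (Complex.re_sum _ _).symm
    _ ≤ ‖∑ n ∈ Finset.range (j + 1), α n * Complex.exp ((γ n a : ℂ) * Complex.I)‖ :=
        Complex.re_le_norm _
end

section
/- For any function β : ℕ → (0,∞) increasing to infinity, there exists a nondecreasing function ψ : ℕ → (0,∞) with ψ(n) → ∞ such that ∑_k 1/(kψ(k)) = ∞ but ∑_k 1/(kψ(k)β(k)) < ∞. -/
open Filter Finset

/-- Partial sums of the harmonic series: `auxH n = ∑_{i<n} 1/(i+1)`. -/
noncomputable def auxH : ℕ → ℝ := fun n => ∑ i ∈ Finset.range n, (1 : ℝ) / (i + 1)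

lemma auxH_nonneg (n : ℕ) : 0 ≤ auxH n :=
  Finset.sum_nonneg fun i _ => by positivity

lemma auxH_mono : Monotone auxH := by
  intro a b hab
  exact Finset.sum_le_sum_of_subset_of_nonneg (Finset.range_subset_range.2 hab)
    (fun i _ _ => by positivity)

lemma auxH_tendsto : Tendsto auxH atTop atTop :=
  Real.tendsto_sum_range_one_div_nat_succ_atTop

lemma auxH_sub (a b : ℕ) (hab : a ≤ b) :
    auxH b - auxH a = ∑ i ∈ Finset.Ico a b, (1 : ℝ) / (i + 1) := by
  rw [Finset.sum_Ico_eq_sub _ hab]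
  rfl

open Classical in
/-- The block endpoints. -/
noncomputable def auxN (β : ℕ → ℝ)
    (hex : ∀ j m : ℕ, ∃ n, m < n ∧ 1 + auxH m ≤ auxH n ∧ (2 : ℝ) ^ (j + 1) ≤ β n) : ℕ → ℕ
  | 0 => 2
  | j + 1 => Nat.find (hex j (auxN β hex j))

/-- For any `β` increasing to infinity there is a nondecreasing `ψ` tending to infinity
with `∑ 1/(k ψ k) = ∞` but `∑ 1/(k ψ k β k) < ∞`. -/
theorem stmt_19 (β : ℕ → ℝ) (hβpos : ∀ k, 0 < β k) (hβmono : Monotone β)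
    (hβtop : Tendsto β atTop atTop) :
    ∃ ψ : ℕ → ℝ, (∀ n, 0 < ψ n) ∧ Monotone ψ ∧ Tendsto ψ atTop atTop ∧
      ¬ Summable (fun k : ℕ => 1 / ((k : ℝ) * ψ k)) ∧
      Summable (fun k : ℕ => 1 / ((k : ℝ) * ψ k * β k)) := by
  classical
  -- existence of suitable block endpoints
  have hex : ∀ j m : ℕ, ∃ n, m < n ∧ 1 + auxH m ≤ auxH n ∧ (2 : ℝ) ^ (j + 1) ≤ β n := by
    intro j m
    have h1 := auxH_tendsto.eventually_ge_atTop (1 + auxH m)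
    have h2 := hβtop.eventually_ge_atTop ((2 : ℝ) ^ (j + 1))
    have h3 : ∀ᶠ n in atTop, m < n := eventually_gt_atTop m
    obtain ⟨n, hn1, hn2, hn3⟩ := (h3.and (h1.and h2)).exists
    exact ⟨n, hn1, hn2, hn3⟩
  set N : ℕ → ℕ := auxN β hex with hN
  have hNsucc : ∀ j, N j < N (j + 1) ∧ 1 + auxH (N j) ≤ auxH (N (j + 1)) ∧
      (2 : ℝ) ^ (j + 1) ≤ β (N (j + 1)) := fun j => Nat.find_spec (hex j (N j))
  have hN0 : N 0 = 2 := rfl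
  have hNmono : StrictMono N := strictMono_nat_of_lt_succ fun j => (hNsucc j).1
  have hNge : ∀ j, j + 2 ≤ N j := by
    intro j
    induction j with
    | zero => simp [hN0]
    | succ j ih => have := (hNsucc j).1; omega
  have hHN : ∀ j : ℕ, (j : ℝ) ≤ auxH (N j) := by
    intro j
    induction j with
    | zero => simpa using auxH_nonneg (N 0)
    | succ j ih =>
      have := (hNsucc j).2.1
      push_cast
      linarith
  have hβN : ∀ j, 1 ≤ j → (2 : ℝ) ^ j ≤ β (N j) := by
    rintro (_ | j) h1
    · omega
    · exact (hNsucc j).2.2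
  -- block index of k
  set jdx : ℕ → ℕ := fun k => Nat.findGreatest (fun j => N j ≤ k) k with hjdx
  have hjdx_le : ∀ k, 2 ≤ k → N (jdx k) ≤ k := by
    intro k hk
    exact Nat.findGreatest_spec (P := fun j => N j ≤ k) (Nat.zero_le k) (by simpa [hN0] using hk)
  have hjdx_ge : ∀ j k, N j ≤ k → j ≤ jdx k := by
    intro j k hjk
    have hjk' : j ≤ k := le_trans (by have := hNge j; omega) hjk
    exact Nat.le_findGreatest hjk' hjk
  have hjdx_lt : ∀ k J, 2 ≤ k → k < N J → jdx k + 1 ≤ J := by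
    intro k J hk hkJ
    by_contra h
    push_neg at h
    have : N J ≤ N (jdx k) := hNmono.monotone (by omega)
    have := hjdx_le k hk
    omega
  have hjdx_mono : Monotone jdx := by
    intro a b hab
    exact Nat.findGreatest_mono (fun j hj => le_trans hj hab) hab
  -- the function ψ
  set ψ : ℕ → ℝ := fun k => auxH (N (jdx k + 1)) with hψ
  have hψpos : ∀ k, 0 < ψ k := by
    intro k
    have h1 : (1 : ℝ) ≤ auxH (N (jdx k + 1)) := by
      have := hHN (jdx k + 1)
      have : ((jdx k : ℝ) + 1) ≤ auxH (N (jdx k + 1)) := by push_cast at this ⊢; linarith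
      have h0 : (0 : ℝ) ≤ jdx k := Nat.cast_nonneg _
      linarith
    simp only [hψ]
    linarith
  have hψmono : Monotone ψ := by
    intro a b hab
    exact auxH_mono (hNmono.monotone (by have := hjdx_mono hab; omega))
  have hψge : ∀ k, (jdx k : ℝ) + 1 ≤ ψ k := by
    intro k
    have := hHN (jdx k + 1)
    simpa [hψ] using (by push_cast at this ⊢; linarith : ((jdx k : ℝ) + 1) ≤ auxH (N (jdx k + 1)))
  have hψtop : Tendsto ψ atTop atTop := by
    apply tendsto_atTop_mono hψge
    apply tendsto_atTop_add_const_right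
    apply tendsto_natCast_atTop_atTop.comp
    apply tendsto_atTop_atTop_of_monotone hjdx_mono
    intro b
    exact ⟨N b, hjdx_ge b (N b) le_rfl⟩
  refine ⟨ψ, hψpos, hψmono, hψtop, ?_, ?_⟩
  · -- divergence
    intro hsum
    set f : ℕ → ℝ := fun k => 1 / ((k : ℝ) * ψ k) with hf
    have hfnn : ∀ k, 0 ≤ f k := by
      intro k
      have := hψpos k
      positivity
    -- key growth claim
    have key : ∀ m : ℕ, ∃ J : ℕ, (m : ℝ) / 2 ≤ ∑ k ∈ Finset.Ico 2 (N J), f k := by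
      intro m
      induction m with
      | zero => exact ⟨0, by simpa using Finset.sum_nonneg fun k _ => hfnn k⟩
      | succ m ih =>
        obtain ⟨J, hJ⟩ := ih
        set J' : ℕ := max (J + 1) (⌈2 * auxH (N J)⌉₊ + 1) with hJ'def
        have hJJ' : J ≤ J' := le_trans (Nat.le_succ J) (le_max_left _ _)
        have hH2 : 2 * auxH (N J) ≤ auxH (N J') := by
          have h1 : (⌈2 * auxH (N J)⌉₊ : ℝ) + 1 ≤ (J' : ℝ) := by
            have : (⌈2 * auxH (N J)⌉₊ + 1 : ℕ) ≤ J' := le_max_right _ _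
            exact_mod_cast this
          have h2 := hHN J'
          have h3 : 2 * auxH (N J) ≤ (⌈2 * auxH (N J)⌉₊ : ℝ) := Nat.le_ceil _
          linarith
        have hHJ'pos : (1 : ℝ) ≤ auxH (N J') := by
          have := hHN J'
          have h1 : (1 : ℝ) ≤ (J' : ℝ) := by
            have : 1 ≤ J' := le_trans (Nat.le_add_left 1 J) (le_max_left _ _)
            exact_mod_cast this
          linarith
        refine ⟨J', ?_⟩
        have hsplit : ∑ k ∈ Finset.Ico 2 (N J'), f k
            = ∑ k ∈ Finset.Ico 2 (N J), f k + ∑ k ∈ Finset.Ico (N J) (N J'), f k := by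
          rw [Finset.sum_Ico_consecutive]
          · exact le_trans (by omega) (hNge J)
          · exact hNmono.monotone hJJ'
        -- chunk lower bound
        have hchunk : (1 : ℝ) / 2 ≤ ∑ k ∈ Finset.Ico (N J) (N J'), f k := by
          have hterm : ∀ k ∈ Finset.Ico (N J) (N J'),
              (1 : ℝ) / ((k : ℝ) + 1) * (1 / auxH (N J')) ≤ f k := by
            intro k hk
            rw [Finset.mem_Ico] at hk
            have hk2 : 2 ≤ k := le_trans (le_trans (by omega) (hNge J)) hk.1
            have hψle : ψ k ≤ auxH (N J') := by
              have := hjdx_lt k J' hk2 hk.2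
              exact auxH_mono (hNmono.monotone this)
            have hkpos : (0 : ℝ) < k := by exact_mod_cast (by omega : 0 < k)
            have hψk := hψpos k
            rw [hf, div_mul_div_comm, one_mul, div_le_div_iff₀ (by positivity) (by positivity)]
            have : (k : ℝ) * ψ k ≤ ((k : ℝ) + 1) * auxH (N J') := by
              apply mul_le_mul (by linarith) hψle (le_of_lt hψk) (by linarith)
            linarith
          have hsum2 : ∑ k ∈ Finset.Ico (N J) (N J'), (1 : ℝ) / ((k : ℝ) + 1) * (1 / auxH (N J'))
              = (auxH (N J') - auxH (N J)) * (1 / auxH (N J')) := by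
            rw [← Finset.sum_mul, ← auxH_sub _ _ (hNmono.monotone hJJ')]
          have h0 : (0 : ℝ) < auxH (N J') := by linarith
          have : (auxH (N J') - auxH (N J)) * (1 / auxH (N J'))
              = 1 - auxH (N J) / auxH (N J') := by field_simp
          have hge : auxH (N J) / auxH (N J') ≤ 1 / 2 := by
            rw [div_le_iff₀ h0]
            linarith
          calc (1 : ℝ) / 2 ≤ 1 - auxH (N J) / auxH (N J') := by linarith
            _ = ∑ k ∈ Finset.Ico (N J) (N J'), (1 : ℝ) / ((k : ℝ) + 1) * (1 / auxH (N J')) := by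
                rw [hsum2, this]
            _ ≤ ∑ k ∈ Finset.Ico (N J) (N J'), f k := Finset.sum_le_sum hterm
        rw [hsplit]
        push_cast
        linarith
    -- contradiction with summability
    obtain ⟨J, hJ⟩ := key (⌈2 * (∑' k, f k) + 2⌉₊)
    have hle : ∑ k ∈ Finset.Ico 2 (N J), f k ≤ ∑' k, f k :=
      Summable.sum_le_tsum _ (fun k _ => hfnn k) hsum
    have htsum0 : 0 ≤ ∑' k, f k := tsum_nonneg hfnn
    have : (2 * (∑' k, f k) + 2 : ℝ) ≤ (⌈2 * (∑' k, f k) + 2⌉₊ : ℝ) := Nat.le_ceil _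
    nlinarith [hJ, hle]
  · -- convergence
    set c : ℝ := min 1 (β 2) with hc
    have hcpos : 0 < c := lt_min one_pos (hβpos 2)
    have hcle1 : c ≤ 1 := min_le_left _ _
    set g : ℕ → ℝ := fun k => 1 / ((k : ℝ) * ψ k * β k) with hg
    have hgnn : ∀ k, 0 ≤ g k := by
      intro k
      have h1 := hψpos k
      have h2 := hβpos k
      positivity
    -- β lower bound on block j
    have hβblock : ∀ j, c * 2 ^ j ≤ β (N j) := by
      intro j
      rcases Nat.eq_zero_or_pos j with rfl | hj
      · have hmr : c ≤ β 2 := min_le_right _ _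
        simpa only [hN0, pow_zero, mul_one] using hmr
      · calc c * 2 ^ j ≤ 1 * 2 ^ j := by
              apply mul_le_mul_of_nonneg_right hcle1 (by positivity)
          _ = 2 ^ j := one_mul _
          _ ≤ β (N j) := hβN j hj
    -- block bound
    have hblock : ∀ j, ∑ k ∈ Finset.Ico (N j) (N (j + 1)), g k ≤ 2 / c * (1 / 2) ^ j := by
      intro j
      have hHpos : (0 : ℝ) < auxH (N (j + 1)) := by
        have := hHN (j + 1)
        have h1 : (0 : ℝ) < ((j : ℝ) + 1) := by positivity
        push_cast at this
        linarith
      have hterm : ∀ k ∈ Finset.Ico (N j) (N (j + 1)),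
          g k ≤ (1 / ((k : ℝ) + 1)) * (2 / (auxH (N (j + 1)) * (c * 2 ^ j))) := by
        intro k hk
        rw [Finset.mem_Ico] at hk
        have hk2 : 2 ≤ k := le_trans (le_trans (by omega) (hNge j)) hk.1
        have hkpos : (0 : ℝ) < k := by exact_mod_cast (by omega : 0 < k)
        have hψk := hψpos k
        have hβk := hβpos k
        have hψge' : auxH (N (j + 1)) ≤ ψ k := by
          have hj' : j ≤ jdx k := hjdx_ge j k hk.1
          exact auxH_mono (hNmono.monotone (by omega))
        have hβge' : c * 2 ^ j ≤ β k := le_trans (hβblock j) (hβmono hk.1)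
        have hcpow : (0 : ℝ) < c * 2 ^ j := by positivity
        have hk1 : ((k : ℝ) + 1) ≤ 2 * (k : ℝ) := by
          have : (1 : ℝ) ≤ (k : ℝ) := by exact_mod_cast (by omega : 1 ≤ k)
          linarith
        rw [hg, div_mul_div_comm, one_mul, div_le_div_iff₀ (by positivity) (by positivity), one_mul]
        calc ((k : ℝ) + 1) * (auxH (N (j + 1)) * (c * 2 ^ j))
            ≤ (2 * (k : ℝ)) * (ψ k * β k) := by
              apply mul_le_mul hk1 (mul_le_mul hψge' hβge' (le_of_lt hcpow) (le_of_lt hψk))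
                (by positivity) (by positivity)
          _ = 2 * ((k : ℝ) * ψ k * β k) := by ring
      calc ∑ k ∈ Finset.Ico (N j) (N (j + 1)), g k
          ≤ ∑ k ∈ Finset.Ico (N j) (N (j + 1)),
            (1 / ((k : ℝ) + 1)) * (2 / (auxH (N (j + 1)) * (c * 2 ^ j))) :=
            Finset.sum_le_sum hterm
        _ = (auxH (N (j + 1)) - auxH (N j)) * (2 / (auxH (N (j + 1)) * (c * 2 ^ j))) := by
            rw [← Finset.sum_mul, ← auxH_sub _ _ (le_of_lt (hNsucc j).1)]
        _ ≤ auxH (N (j + 1)) * (2 / (auxH (N (j + 1)) * (c * 2 ^ j))) := by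
            apply mul_le_mul_of_nonneg_right (by have := auxH_nonneg (N j); linarith)
            positivity
        _ = 2 / c * (1 / 2) ^ j := by
            field_simp
            ring_nf
            simp [← mul_pow]
    -- partial sums bounded
    apply summable_of_sum_range_le (c := g 1 + 2 / c * 2) hgnn
    intro n
    have hle1 : ∑ k ∈ Finset.range n, g k ≤ ∑ k ∈ Finset.range (N n), g k := by
      apply Finset.sum_le_sum_of_subset_of_nonneg
      · exact Finset.range_subset_range.2 (le_trans (by omega) (hNge n))
      · intro k _ _; exact hgnn k
    have hsplit : ∀ J : ℕ, ∑ k ∈ Finset.range (N J), g k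
        = ∑ k ∈ Finset.range 2, g k + ∑ j ∈ Finset.range J, ∑ k ∈ Finset.Ico (N j) (N (j + 1)), g k := by
      intro J
      induction J with
      | zero => simp [hN0]
      | succ J ih =>
        rw [Finset.sum_range_succ (fun j => ∑ k ∈ Finset.Ico (N j) (N (j + 1)), g k) J, ← add_assoc, ← ih, Finset.range_eq_Ico, Finset.range_eq_Ico]
        exact (Finset.sum_Ico_consecutive (fun k => g k) (Nat.zero_le (N J)) (le_of_lt (hNsucc J).1)).symm
    have hg0 : g 0 = 0 := by simp [hg]
    have hg2 : ∑ k ∈ Finset.range 2, g k = g 1 := by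
      rw [Finset.sum_range_succ, Finset.sum_range_one, hg0, zero_add]
    calc ∑ k ∈ Finset.range n, g k ≤ ∑ k ∈ Finset.range (N n), g k := hle1
      _ = g 1 + ∑ j ∈ Finset.range n, ∑ k ∈ Finset.Ico (N j) (N (j + 1)), g k := by
          rw [hsplit n, hg2]
      _ ≤ g 1 + ∑ j ∈ Finset.range n, 2 / c * (1 / 2) ^ j := by
          gcongr with j hj
          exact hblock j
      _ = g 1 + 2 / c * ∑ j ∈ Finset.range n, (1 / 2 : ℝ) ^ j := by
          rw [Finset.mul_sum]
      _ ≤ g 1 + 2 / c * 2 := by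
          have h1 := sum_geometric_two_le n
          have h2 : (0 : ℝ) ≤ 2 / c := by positivity
          nlinarith
end
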